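/- Let m > −1, 0 ≤ a₀ ≤ a₁, and K, L > 0, k a natural number. Then there exists a polynomial P with nonnegative coefficients such that ∫_{a₀}^{a₁} max(x,L)^m · (ln₊(max(x,K)/max(min(K,x),L)))^k dx ≤ max(a₁,L)^{m+1} · P(ln₊(max(a₁,K)/max(min(K,a₁),L))). -/

import Mathlib

/-! Write `M = max a₁ L`, `u = max x L` and `ρ x = max x K / max (min K x) L`. For `x ≤ a₁`,
`ρ x ≤ max (ρ a₁) 1 · M / u`, hence `ln₊ (ρ x) ≤ ln₊ (ρ a₁) + ln₊ (M / u)`. Since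
`ln₊ t ≤ t ^ ε / ε`, the `k`-th power of the right side is at most
`(ln₊ (ρ a₁) + c) ^ k (M / u) ^ s` with `s = (m + 1) / 2` and `c = (k + 1) / s`, so the integrand
is at most `(ln₊ (ρ a₁) + c) ^ k M ^ s u ^ ((m - 1) / 2)`. The exponent `(m - 1) / 2` still
exceeds `-1`, so the integral of `u ^ ((m - 1) / 2)` is `O(M ^ s)`. -/

/-- The positive part of the logarithm: `ln₊ x = max (ln x) 0`. -/
noncomputable def lnp (x : ℝ) : ℝ := max (Real.log x) 0

open Real Set MeasureTheory intervalIntegral Polynomial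

lemma lnp_nonneg (x : ℝ) : 0 ≤ lnp x := le_max_right _ _

lemma lnp_le_lnp {x y : ℝ} (hx : 0 < x) (h : x ≤ y) : lnp x ≤ lnp y :=
  max_le_max (log_le_log hx h) le_rfl

lemma lnp_mul_le {x y : ℝ} (hx : 0 < x) (hy : 0 < y) : lnp (x * y) ≤ lnp x + lnp y := by
  rw [lnp, log_mul hx.ne' hy.ne']
  exact max_le (add_le_add (le_max_left _ _) (le_max_left _ _))
    (add_nonneg (lnp_nonneg x) (lnp_nonneg y))

lemma lnp_max_one {x : ℝ} (hx : 0 < x) : lnp (max x 1) = lnp x := by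
  rcases le_total x 1 with h | h
  · rw [max_eq_right h, lnp, lnp, log_one, max_self, max_eq_right (log_nonpos hx.le h)]
  · rw [max_eq_left h]

lemma lnp_le_rpow_div {x ε : ℝ} (hx : 0 ≤ x) (hε : 0 < ε) : lnp x ≤ x ^ ε / ε :=
  max_le (log_le_rpow_div hx hε) (by positivity)

-- Take `ε = s / (k + 1)` in `ln₊ t ≤ t ^ ε / ε`; then `ε * k ≤ s`.
lemma add_lnp_pow_le {E t s : ℝ} (k : ℕ) (hE : 0 ≤ E) (ht : 1 ≤ t) (hs : 0 < s) :
    (E + lnp t) ^ k ≤ (E + (k + 1) / s) ^ k * t ^ s := by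
  set ε := s / (k + 1) with hε_def
  have hε : 0 < ε := by positivity
  have hlin : E + lnp t ≤ (E + (k + 1) / s) * t ^ ε := by
    have h₁ : lnp t ≤ (k + 1) / s * t ^ ε := by
      convert lnp_le_rpow_div (zero_le_one.trans ht) hε using 1
      rw [hε_def]; field_simp
    have h₂ : E ≤ E * t ^ ε := le_mul_of_one_le_right hE (one_le_rpow ht hε.le)
    linarith
  have hεk : ε * k ≤ s := by
    rw [hε_def, div_mul_eq_mul_div, div_le_iff₀ (by positivity)]
    nlinarith
  calc (E + lnp t) ^ k ≤ ((E + (k + 1) / s) * t ^ ε) ^ k :=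
        pow_le_pow_left₀ (add_nonneg hE (lnp_nonneg t)) hlin k
    _ = (E + (k + 1) / s) ^ k * t ^ (ε * k) := by
        rw [mul_pow, rpow_mul_natCast (zero_le_one.trans ht)]
    _ ≤ (E + (k + 1) / s) ^ k * t ^ s := by gcongr

lemma intervalIntegral.integral_mono_on_of_nonneg {f g : ℝ → ℝ} {a b : ℝ} (hab : a ≤ b)
    (hg : IntervalIntegrable g volume a b) (hf : ∀ x ∈ Icc a b, 0 ≤ f x)
    (h : ∀ x ∈ Icc a b, f x ≤ g x) :
    ∫ x in a..b, f x ≤ ∫ x in a..b, g x := by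
  rw [integral_of_le hab, integral_of_le hab]
  have hIoc {p : ℝ → Prop} (hp : ∀ x ∈ Icc a b, p x) : ∀ᵐ x ∂volume.restrict (Ioc a b), p x :=
    (ae_restrict_iff' measurableSet_Ioc).2
      (ae_of_all _ fun x hx => hp x (Ioc_subset_Icc_self hx))
  exact integral_mono_of_nonneg (hIoc hf) hg.1 (hIoc h)

lemma integral_max_rpow_le_of_nonneg {a b L r : ℝ} (ha : 0 ≤ a) (hab : a ≤ b) (hr : 0 ≤ r) :
    ∫ x in a..b, max x L ^ r ≤ max b L ^ (r + 1) := by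
  have hM : 0 ≤ max b L := (ha.trans hab).trans (le_max_left _ _)
  calc ∫ x in a..b, max x L ^ r ≤ ∫ _ in a..b, max b L ^ r :=
        integral_mono_on hab
          (((continuous_id.max continuous_const).rpow_const fun _ =>
            Or.inr hr).intervalIntegrable _ _)
          intervalIntegrable_const fun x hx =>
            rpow_le_rpow (ha.trans hx.1 |>.trans (le_max_left _ _)) (max_le_max hx.2 le_rfl) hr
    _ = (b - a) * max b L ^ r := by rw [intervalIntegral.integral_const, smul_eq_mul]
    _ ≤ max b L * max b L ^ r := by
        gcongr
        linarith [le_max_left b L]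
    _ = max b L ^ (r + 1) := by rw [rpow_add_one' hM (by linarith), mul_comm]

lemma integral_max_rpow_le_of_nonpos {a b L r : ℝ} (ha : 0 ≤ a) (hab : a ≤ b) (hL : 0 < L)
    (hr₁ : -1 < r) (hr : r ≤ 0) :
    ∫ x in a..b, max x L ^ r ≤ max b L ^ (r + 1) / (r + 1) := by
  have hr₁' : 0 < r + 1 := by linarith
  calc ∫ x in a..b, max x L ^ r ≤ ∫ x in a..b, x ^ r :=
        integral_mono_on_of_le_Ioo hab
          (((continuous_id.max continuous_const).rpow_const fun _ =>
            Or.inl (lt_max_of_lt_right hL).ne').intervalIntegrable _ _)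
          (intervalIntegral.intervalIntegrable_rpow' hr₁) fun x hx =>
            rpow_le_rpow_of_nonpos (ha.trans_lt hx.1) (le_max_left _ _) hr
    _ = (b ^ (r + 1) - a ^ (r + 1)) / (r + 1) := integral_rpow (Or.inl hr₁)
    _ ≤ max b L ^ (r + 1) / (r + 1) := by
        gcongr
        have := rpow_nonneg ha (r + 1)
        have := rpow_le_rpow (ha.trans hab) (le_max_left b L) hr₁'.le
        linarith

lemma integral_max_rpow_le {a b L r : ℝ} (ha : 0 ≤ a) (hab : a ≤ b) (hL : 0 < L)
    (hr : -1 < r) :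
    ∫ x in a..b, max x L ^ r ≤ max 1 (r + 1)⁻¹ * max b L ^ (r + 1) := by
  have hM : 0 ≤ max b L ^ (r + 1) := rpow_nonneg (hL.le.trans (le_max_right _ _)) _
  rcases le_total 0 r with hr₀ | hr₀
  · exact (integral_max_rpow_le_of_nonneg ha hab hr₀).trans
      (le_mul_of_one_le_left hM (le_max_left _ _))
  · calc _ ≤ max b L ^ (r + 1) / (r + 1) := integral_max_rpow_le_of_nonpos ha hab hL hr hr₀
      _ = (r + 1)⁻¹ * max b L ^ (r + 1) := by rw [div_eq_inv_mul]
      _ ≤ _ := by gcongr; exact le_max_right _ _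

lemma ratio_le_max_one_mul {K L x a : ℝ} (hL : 0 < L) (hxa : x ≤ a) :
    max x K / max (min K x) L ≤ max (max a K / max (min K a) L) 1 * (max a L / max x L) := by
  have hxL : 0 < max x L := lt_max_of_lt_right hL
  have haL : 0 < max a L := lt_max_of_lt_right hL
  rcases le_total x K with hxK | hKx
  · rw [max_eq_right hxK, min_eq_right hxK, ← mul_div_assoc]
    gcongr
    rcases le_total K a with hKa | haK
    · exact (hKa.trans (le_max_left a L)).trans (le_mul_of_one_le_left haL.le (le_max_right _ _))
    · rw [max_eq_right haK, min_eq_right haK, ← div_le_iff₀ haL]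
      exact le_max_left _ _
  · have hKa := hKx.trans hxa
    rw [max_eq_left hKx, min_eq_left hKx]
    calc x / max K L ≤ a / max K L := by gcongr
      _ = max a K / max (min K a) L := by rw [max_eq_left hKa, min_eq_left hKa]
      _ ≤ max (max a K / max (min K a) L) 1 := le_max_left _ _
      _ ≤ _ := le_mul_of_one_le_right (zero_le_one.trans (le_max_right _ _))
          ((one_le_div hxL).2 (max_le_max hxa le_rfl))

lemma lnp_ratio_le {K L x a : ℝ} (hK : 0 < K) (hL : 0 < L) (hxa : x ≤ a) :
    lnp (max x K / max (min K x) L)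
      ≤ lnp (max a K / max (min K a) L) + lnp (max a L / max x L) := by
  have hratio : ∀ y, 0 < max y K / max (min K y) L := fun y =>
    div_pos (lt_max_of_lt_right hK) (lt_max_of_lt_right hL)
  calc lnp (max x K / max (min K x) L)
      ≤ lnp (max (max a K / max (min K a) L) 1 * (max a L / max x L)) :=
        lnp_le_lnp (hratio x) (ratio_le_max_one_mul hL hxa)
    _ ≤ lnp (max (max a K / max (min K a) L) 1) + lnp (max a L / max x L) :=
        lnp_mul_le (zero_lt_one.trans_le (le_max_right _ _))
          (div_pos (lt_max_of_lt_right hL) (lt_max_of_lt_right hL))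
    _ = _ := by rw [lnp_max_one (hratio a)]

lemma max_rpow_mul_lnp_ratio_pow_le {m s K L x a : ℝ} (k : ℕ) (hK : 0 < K) (hL : 0 < L)
    (hs : 0 < s) (hxa : x ≤ a) :
    max x L ^ m * lnp (max x K / max (min K x) L) ^ k
      ≤ (lnp (max a K / max (min K a) L) + (k + 1) / s) ^ k * max a L ^ s
          * max x L ^ (m - s) := by
  have hxL : 0 < max x L := lt_max_of_lt_right hL
  have haL : 0 < max a L := lt_max_of_lt_right hL
  have hpow := (pow_le_pow_left₀ (lnp_nonneg _) (lnp_ratio_le hK hL hxa) k).trans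
    (add_lnp_pow_le k (lnp_nonneg _) ((one_le_div hxL).2 (max_le_max hxa le_rfl)) hs)
  calc max x L ^ m * lnp (max x K / max (min K x) L) ^ k
      ≤ max x L ^ m * ((lnp (max a K / max (min K a) L) + (k + 1) / s) ^ k
          * (max a L / max x L) ^ s) := by gcongr
    _ = _ := by rw [div_rpow haL.le hxL.le, rpow_sub hxL]; ring

/-- Lemma (Taylor expansion): for `m > −1` and `k : ℕ`, there is a polynomial `P` with
nonnegative coefficients such that for all `0 ≤ a₀ ≤ a₁` and `K, L > 0`,
`∫_{a₀}^{a₁} max(x,L)^m (ln₊(max(x,K)/max(min(K,x),L)))^k dx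
  ≤ max(a₁,L)^{m+1} · P(ln₊(max(a₁,K)/max(min(K,a₁),L)))`. -/
theorem taylor_expansion_integral (m : ℝ) (hm : -1 < m) (k : ℕ) :
    ∃ P : Polynomial ℝ, (∀ n, 0 ≤ P.coeff n) ∧
      ∀ a₀ a₁ K L : ℝ, 0 ≤ a₀ → a₀ ≤ a₁ → 0 < K → 0 < L →
        (∫ x in a₀..a₁, (max x L) ^ m * (lnp (max x K / max (min K x) L)) ^ k)
          ≤ (max a₁ L) ^ (m + 1) * P.eval (lnp (max a₁ K / max (min K a₁) L)) := by
  set s := (m + 1) / 2 with hs_def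
  have hs : 0 < s := by linarith
  refine ⟨C (max 1 s⁻¹) * (X + C ((k + 1) / s)) ^ k, fun n => ?_, ?_⟩
  · rw [coeff_C_mul, coeff_X_add_C_pow]
    positivity
  intro a₀ a₁ K L ha₀ ha₀₁ hK hL
  set E := lnp (max a₁ K / max (min K a₁) L)
  set M := max a₁ L
  have hM : 0 < M := lt_max_of_lt_right hL
  have hbound : IntervalIntegrable (fun x => (E + (k + 1) / s) ^ k * M ^ s * max x L ^ (m - s))
      volume a₀ a₁ :=
    (continuous_const.mul ((continuous_id.max continuous_const).rpow_const fun _ =>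
      Or.inl (lt_max_of_lt_right hL).ne')).intervalIntegrable _ _
  have hint : ∫ x in a₀..a₁, max x L ^ (m - s) ≤ max 1 s⁻¹ * M ^ s := by
    simpa only [show m - s + 1 = s by linarith] using
      integral_max_rpow_le ha₀ ha₀₁ hL (r := m - s) (by linarith)
  calc ∫ x in a₀..a₁, max x L ^ m * lnp (max x K / max (min K x) L) ^ k
      ≤ ∫ x in a₀..a₁, (E + (k + 1) / s) ^ k * M ^ s * max x L ^ (m - s) :=
        integral_mono_on_of_nonneg ha₀₁ hbound
          (fun x _ => mul_nonneg (rpow_nonneg (hL.le.trans (le_max_right _ _)) _)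
            (pow_nonneg (lnp_nonneg _) _))
          fun x hx => max_rpow_mul_lnp_ratio_pow_le k hK hL hs hx.2
    _ = (E + (k + 1) / s) ^ k * M ^ s * ∫ x in a₀..a₁, max x L ^ (m - s) :=
        intervalIntegral.integral_const_mul _ _
    _ ≤ (E + (k + 1) / s) ^ k * M ^ s * (max 1 s⁻¹ * M ^ s) := by
        have hE : 0 ≤ E := lnp_nonneg _
        gcongr
    _ = M ^ (m + 1) * eval E (C (max 1 s⁻¹) * (X + C ((k + 1) / s)) ^ k) := by
        rw [show m + 1 = s + s by linarith, rpow_add hM]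
        simp only [eval_mul, eval_C, eval_pow, eval_add, eval_X]
        ring
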